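/- Let λ₁, λ₂ > 0, ℓ₀ ≥ 1, σ₀, σ₁ ∈ ℝ with σ₀² + σ₁² > 0, and set c₁ = λ₁ℓ₀/(σ₀² + σ₁²) and c₂ = c₁ e^{-c₁ℓ₀}. Define f(r) = 1 - e^{-c₁ r} + c₂ r and ψ(r) = (1/2) f'(r)·((λ₁+λ₂)·1_{r ≤ ℓ₀} - λ₂)·r + 2(σ₀² + σ₁²) f''(r). Then for all r ∈ [0, ℓ₀], ψ(r) ≤ -c₁² e^{-c₁ℓ₀}(σ₀² + σ₁²) ≤ -(c₁c₂(σ₀² + σ₁²)/(1 - e^{-c₁ℓ₀} + c₂ℓ₀))·f(r). -/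

import Mathlib

/-!
On `[0, ℓ₀]` the indicator equals one, so `ψ(r) = λ₁ (c₁ e^{-c₁ r} + c₂) r / 2 - 2 (σ₀² + σ₁²) c₁² e^{-c₁ r}`.
Since `c₁ (σ₀² + σ₁²) = λ₁ ℓ₀` and `c₂ = c₁ e^{-c₁ ℓ₀} ≤ c₁ e^{-c₁ r}`, the drift term is at most `λ₁ c₁ ℓ₀ e^{-c₁ r}`,
half of the diffusion term, whence `ψ(r) ≤ -λ₁ c₁ ℓ₀ e^{-c₁ r} ≤ -c₁² e^{-c₁ ℓ₀} (σ₀² + σ₁²)`.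
The second bound holds because `f` is nonnegative and increasing on `[0, ℓ₀]`, so `f(r) / f(ℓ₀) ≤ 1`.
-/

open Real

lemma div_mul_le_of_le {a b d : ℝ} (ha : 0 ≤ a) (hb : 0 ≤ b) (hbd : b ≤ d) : a / d * b ≤ a := by
  rcases (hb.trans hbd).eq_or_lt with hd | hd
  · simp [← hd, ha]
  · calc a / d * b ≤ a / d * d := by gcongr
      _ = a := div_mul_cancel₀ a hd.ne'

lemma exp_neg_mul_le_exp_neg_mul {c r s : ℝ} (hc : 0 ≤ c) (hrs : r ≤ s) :
    exp (-(c * s)) ≤ exp (-(c * r)) :=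
  exp_le_exp.mpr (neg_le_neg (mul_le_mul_of_nonneg_left hrs hc))

lemma one_sub_exp_neg_mul_add_mul_nonneg {c c₂ r : ℝ} (hc : 0 ≤ c) (hc₂ : 0 ≤ c₂) (hr : 0 ≤ r) :
    0 ≤ 1 - exp (-(c * r)) + c₂ * r := by
  have : exp (-(c * r)) ≤ 1 := by simpa using exp_neg_mul_le_exp_neg_mul hc hr
  nlinarith

lemma one_sub_exp_neg_mul_add_mul_mono {c c₂ r s : ℝ} (hc : 0 ≤ c) (hc₂ : 0 ≤ c₂) (hrs : r ≤ s) :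
    1 - exp (-(c * r)) + c₂ * r ≤ 1 - exp (-(c * s)) + c₂ * s := by
  have := exp_neg_mul_le_exp_neg_mul hc hrs
  nlinarith

lemma drift_add_diffusion_le {lam c D L r : ℝ} (hlam : 0 ≤ lam) (hc : 0 ≤ c) (hr : 0 ≤ r)
    (hrL : r ≤ L) (hcD : c * D = lam * L) :
    1 / 2 * (c * exp (-(c * r)) + c * exp (-(c * L))) * lam * r
        + 2 * D * (-(c ^ 2 * exp (-(c * r))))
      ≤ -(c ^ 2 * exp (-(c * L)) * D) := by
  set Er := exp (-(c * r))
  set EL := exp (-(c * L))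
  have hEL : EL ≤ Er := exp_neg_mul_le_exp_neg_mul hc hrL
  have hdrift : 1 / 2 * (Er + EL) * r ≤ L * Er := by nlinarith [exp_pos (-(c * L))]
  have hlc : 0 ≤ lam * c := mul_nonneg hlam hc
  calc 1 / 2 * (c * Er + c * EL) * lam * r + 2 * D * (-(c ^ 2 * Er))
        = lam * c * (1 / 2 * (Er + EL) * r - 2 * L * Er) := by
          linear_combination (-2 * c * Er) * hcD
    _ ≤ lam * c * (-(L * Er)) := by gcongr; linarith
    _ ≤ lam * c * (-(L * EL)) := by gcongr; linarith
    _ = -(c ^ 2 * EL * D) := by linear_combination (c * EL) * hcD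

theorem psi_bound_small_r_general (lam₁ lam₂ ℓ₀ σ₀ σ₁ c₁ c₂ : ℝ)
    (hlam₁ : 0 < lam₁) (hσ : 0 < σ₀ ^ 2 + σ₁ ^ 2)
    (hc₁ : c₁ = lam₁ * ℓ₀ / (σ₀ ^ 2 + σ₁ ^ 2)) (hc₂ : c₂ = c₁ * Real.exp (-(c₁ * ℓ₀))) :
    ∀ r : ℝ, 0 ≤ r → r ≤ ℓ₀ →
      (1 / 2) * (c₁ * Real.exp (-(c₁ * r)) + c₂) *
            ((lam₁ + lam₂) * (if r ≤ ℓ₀ then (1 : ℝ) else 0) - lam₂) * r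
          + 2 * (σ₀ ^ 2 + σ₁ ^ 2) * (-(c₁ ^ 2 * Real.exp (-(c₁ * r))))
        ≤ -(c₁ ^ 2 * Real.exp (-(c₁ * ℓ₀)) * (σ₀ ^ 2 + σ₁ ^ 2)) ∧
      -(c₁ ^ 2 * Real.exp (-(c₁ * ℓ₀)) * (σ₀ ^ 2 + σ₁ ^ 2))
        ≤ -(c₁ * c₂ * (σ₀ ^ 2 + σ₁ ^ 2) / (1 - Real.exp (-(c₁ * ℓ₀)) + c₂ * ℓ₀)) *
            (1 - Real.exp (-(c₁ * r)) + c₂ * r) := by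
  intro r hr hrℓ
  have hc₁_nonneg : 0 ≤ c₁ := by rw [hc₁]; have := hr.trans hrℓ; positivity
  have hc₂_nonneg : 0 ≤ c₂ := by rw [hc₂]; positivity
  have hc₁σ : c₁ * (σ₀ ^ 2 + σ₁ ^ 2) = lam₁ * ℓ₀ := by rw [hc₁]; field_simp
  have hgain : (lam₁ + lam₂) * (if r ≤ ℓ₀ then (1 : ℝ) else 0) - lam₂ = lam₁ := by
    rw [if_pos hrℓ]; ring
  have hcoeff : c₁ * c₂ * (σ₀ ^ 2 + σ₁ ^ 2) = c₁ ^ 2 * exp (-(c₁ * ℓ₀)) * (σ₀ ^ 2 + σ₁ ^ 2) := by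
    rw [hc₂]; ring
  refine ⟨?_, ?_⟩
  · rw [hgain, hc₂]
    exact drift_add_diffusion_le hlam₁.le hc₁_nonneg hr hrℓ hc₁σ
  · rw [hcoeff, neg_mul, neg_le_neg_iff]
    exact div_mul_le_of_le (by positivity)
      (one_sub_exp_neg_mul_add_mul_nonneg hc₁_nonneg hc₂_nonneg hr)
      (one_sub_exp_neg_mul_add_mul_mono hc₁_nonneg hc₂_nonneg hrℓ)

theorem psi_bound_small_r (lam₁ lam₂ ℓ₀ σ₀ σ₁ c₁ c₂ : ℝ)
    (hlam₁ : 0 < lam₁) (hlam₂ : 0 < lam₂) (hℓ₀ : 1 ≤ ℓ₀) (hσ : 0 < σ₀ ^ 2 + σ₁ ^ 2)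
    (hc₁ : c₁ = lam₁ * ℓ₀ / (σ₀ ^ 2 + σ₁ ^ 2)) (hc₂ : c₂ = c₁ * Real.exp (-(c₁ * ℓ₀))) :
    ∀ r : ℝ, 0 ≤ r → r ≤ ℓ₀ →
      (1 / 2) * (c₁ * Real.exp (-(c₁ * r)) + c₂) *
            ((lam₁ + lam₂) * (if r ≤ ℓ₀ then (1 : ℝ) else 0) - lam₂) * r
          + 2 * (σ₀ ^ 2 + σ₁ ^ 2) * (-(c₁ ^ 2 * Real.exp (-(c₁ * r))))
        ≤ -(c₁ ^ 2 * Real.exp (-(c₁ * ℓ₀)) * (σ₀ ^ 2 + σ₁ ^ 2)) ∧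
      -(c₁ ^ 2 * Real.exp (-(c₁ * ℓ₀)) * (σ₀ ^ 2 + σ₁ ^ 2))
        ≤ -(c₁ * c₂ * (σ₀ ^ 2 + σ₁ ^ 2) / (1 - Real.exp (-(c₁ * ℓ₀)) + c₂ * ℓ₀)) *
            (1 - Real.exp (-(c₁ * r)) + c₂ * r) :=
  psi_bound_small_r_general lam₁ lam₂ ℓ₀ σ₀ σ₁ c₁ c₂ hlam₁ hσ hc₁ hc₂
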